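/- arXiv:2303.10588 — 5 statements merged into one kernel-verified Lean document; each statement's English description precedes it below -/
import Mathlib

section
/- Let Γ₁ ⊂ X₁ and Γ₂ ⊂ X₂ be continuous actions of discrete groups on topological spaces that are continuous orbit equivalent via a homeomorphism φ : X₁ → X₂ and continuous cocycle maps a : Γ₁ × X₁ → Γ₂, b : Γ₂ × X₂ → Γ₁ (so φ(γ·x) = a(γ,x)·φ(x) and φ⁻¹(η·y) = b(η,y)·φ⁻¹(y)). If the action Γ₂ ⊂ X₂ is topologically free, then a satisfies the cocycle identity: a(γ'γ, x) = a(γ', γ·x) · a(γ, x) for all γ, γ' ∈ Γ₁ and x ∈ X₁. -/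
theorem eq_one_of_continuous_of_smul_eq_self {Γ Y : Type*} [Monoid Γ] [TopologicalSpace Γ]
    [DiscreteTopology Γ] [TopologicalSpace Y] [MulAction Γ Y]
    (htf : ∀ η : Γ, η ≠ 1 → Dense {y : Y | η • y ≠ y}) {η : Y → Γ} (hη : Continuous η)
    (hfix : ∀ y, η y • y = y) (y : Y) : η y = 1 := by
  by_contra hy
  -- The fibre of `η` through `y` is open, so it meets the dense set of points moved by `η y`.
  obtain ⟨z, hmoved, hz⟩ := (htf (η y) hy).exists_mem_open
    (hη.isOpen_preimage _ (isOpen_discrete {η y})) ⟨y, rfl⟩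
  exact hmoved (hz ▸ hfix z)

theorem eq_of_continuous_of_smul_eq_smul {Γ Y : Type*} [Group Γ] [TopologicalSpace Γ]
    [DiscreteTopology Γ] [TopologicalSpace Y] [MulAction Γ Y]
    (htf : ∀ η : Γ, η ≠ 1 → Dense {y : Y | η • y ≠ y}) {η₁ η₂ : Y → Γ}
    (h₁ : Continuous η₁) (h₂ : Continuous η₂) (h : ∀ y, η₁ y • y = η₂ y • y) :
    η₁ = η₂ := by
  funext y
  have hfix : ∀ y, ((η₂ y)⁻¹ * η₁ y) • y = y := fun y => by
    rw [mul_smul, h, inv_smul_smul]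
  exact (inv_mul_eq_one.mp (eq_one_of_continuous_of_smul_eq_self htf (h₂.inv.mul h₁) hfix y)).symm

theorem stmt0_general {Γ₁ Γ₂ X₁ X₂ : Type*} [Group Γ₁] [Group Γ₂]
    [TopologicalSpace Γ₁]
    [TopologicalSpace Γ₂] [DiscreteTopology Γ₂]
    [TopologicalSpace X₁] [TopologicalSpace X₂]
    [MulAction Γ₁ X₁] [MulAction Γ₂ X₂]
    [ContinuousConstSMul Γ₁ X₁]
    (φ : X₁ ≃ₜ X₂) (a : Γ₁ × X₁ → Γ₂)
    (ha : Continuous a)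
    (hφ : ∀ (γ : Γ₁) (x : X₁), φ (γ • x) = a (γ, x) • φ x)
    (htf₂ : ∀ η : Γ₂, η ≠ 1 → Dense {y : X₂ | η • y ≠ y}) :
    ∀ (γ γ' : Γ₁) (x : X₁), a (γ' * γ, x) = a (γ', γ • x) * a (γ, x) := by
  intro γ γ' x
  have ha_at : ∀ (g : Γ₁) {f : X₂ → X₁}, Continuous f → Continuous fun y => a (g, f y) :=
    fun g _ hf => ha.comp (continuous_const.prodMk hf)
  have key := eq_of_continuous_of_smul_eq_smul htf₂
    (η₁ := fun y => a (γ' * γ, φ.symm y)) (η₂ := fun y => a (γ', γ • φ.symm y) * a (γ, φ.symm y))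
    (ha_at _ φ.symm.continuous)
    ((ha_at γ' ((continuous_const_smul γ).comp φ.symm.continuous)).mul (ha_at γ φ.symm.continuous))
    (fun y => by
      obtain ⟨x, rfl⟩ := φ.surjective y
      simp only [Homeomorph.symm_apply_apply, ← hφ, mul_smul])
  simpa using congrFun key (φ x)

/-- continuity of the cocycle `a` plus topological freeness of the
second action forces the cocycle identity
`a(γ'γ, x) = a(γ', γ·x) · a(γ, x)`. -/
theorem stmt0 {Γ₁ Γ₂ X₁ X₂ : Type*} [Group Γ₁] [Group Γ₂]
    [TopologicalSpace Γ₁] [DiscreteTopology Γ₁]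
    [TopologicalSpace Γ₂] [DiscreteTopology Γ₂]
    [TopologicalSpace X₁] [TopologicalSpace X₂]
    [MulAction Γ₁ X₁] [MulAction Γ₂ X₂]
    [ContinuousConstSMul Γ₁ X₁] [ContinuousConstSMul Γ₂ X₂]
    (φ : X₁ ≃ₜ X₂) (a : Γ₁ × X₁ → Γ₂) (b : Γ₂ × X₂ → Γ₁)
    (ha : Continuous a) (hb : Continuous b)
    (hφ : ∀ (γ : Γ₁) (x : X₁), φ (γ • x) = a (γ, x) • φ x)
    (hφ' : ∀ (η : Γ₂) (y : X₂), φ.symm (η • y) = b (η, y) • φ.symm y)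
    (htf₂ : ∀ η : Γ₂, η ≠ 1 → Dense {y : X₂ | η • y ≠ y}) :
    ∀ (γ γ' : Γ₁) (x : X₁), a (γ' * γ, x) = a (γ', γ • x) * a (γ, x) :=
  stmt0_general φ a ha hφ htf₂
end

section
/- Let Γ₁ ⊂ X₁ and Γ₂ ⊂ X₂ be continuous actions of discrete groups on topological spaces, continuous orbit equivalent via φ, a, b, and assume both actions are topologically free. Then for all γ ∈ Γ₁ and x ∈ X₁ one has b(a(γ,x), φ(x)) = γ, and for all η ∈ Γ₂ and y ∈ X₂ one has a(b(η,y), φ⁻¹(y)) = η. -/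
/-!
A continuous map `f` from a space into a discrete group with `f x • x = γ • x` everywhere is
locally constant, so if it took a value `g ≠ γ` it would do so on a nonempty open set, on which
`γ⁻¹ * g` fixes every point; topological freeness forbids this. The orbit equivalence relations
`φ (γ • x) = a (γ, x) • φ x` and `φ⁻¹ (η • y) = b (η, y) • φ⁻¹ y` give
`b (a (γ, x), φ x) • x = γ • x`, so `b (a (γ, x), φ x) = γ`, and symmetrically for `φ⁻¹`.
-/

namespace MulAction

def IsTopologicallyFree (Γ X : Type*) [Group Γ] [TopologicalSpace X] [MulAction Γ X] : Prop :=
  ∀ γ : Γ, γ ≠ 1 → Dense {x : X | γ • x ≠ x}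

theorem IsTopologicallyFree.eq_of_continuous_of_smul_eq {Γ X : Type*} [Group Γ]
    [TopologicalSpace Γ] [DiscreteTopology Γ] [TopologicalSpace X] [MulAction Γ X]
    (htf : IsTopologicallyFree Γ X) {f : X → Γ} (hf : Continuous f) {γ : Γ}
    (h : ∀ x, f x • x = γ • x) (x : X) : f x = γ := by
  by_contra hne
  have hmoving : γ⁻¹ * f x ≠ 1 := by rwa [ne_eq, inv_mul_eq_one, eq_comm]
  obtain ⟨y, hy_moved, hy⟩ := (htf _ hmoving).exists_mem_open
    (hf.isOpen_preimage _ (isOpen_discrete {f x})) ⟨x, rfl⟩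
  rw [Set.mem_preimage, Set.mem_singleton_iff] at hy
  exact hy_moved (by rw [mul_smul, ← hy, h, inv_smul_smul])

end MulAction

open MulAction

section OrbitEquivalence

variable {Γ₁ Γ₂ X₁ X₂ : Type*} [Group Γ₁] [Group Γ₂] [TopologicalSpace X₁] [TopologicalSpace X₂]
  [MulAction Γ₁ X₁] [MulAction Γ₂ X₂]

theorem cocycle_cocycle_smul (φ : X₁ ≃ₜ X₂) (a : Γ₁ × X₁ → Γ₂) (b : Γ₂ × X₂ → Γ₁)
    (hφ : ∀ (γ : Γ₁) (x : X₁), φ (γ • x) = a (γ, x) • φ x)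
    (hφ' : ∀ (η : Γ₂) (y : X₂), φ.symm (η • y) = b (η, y) • φ.symm y) (γ : Γ₁) (x : X₁) :
    b (a (γ, x), φ x) • x = γ • x :=
  calc b (a (γ, x), φ x) • x = b (a (γ, x), φ x) • φ.symm (φ x) := by rw [φ.symm_apply_apply]
    _ = φ.symm (a (γ, x) • φ x) := (hφ' _ _).symm
    _ = γ • x := by rw [← hφ, φ.symm_apply_apply]

theorem cocycle_cocycle_eq [TopologicalSpace Γ₁] [DiscreteTopology Γ₁] [TopologicalSpace Γ₂]
    (φ : X₁ ≃ₜ X₂) (a : Γ₁ × X₁ → Γ₂) (b : Γ₂ × X₂ → Γ₁) (ha : Continuous a) (hb : Continuous b)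
    (hφ : ∀ (γ : Γ₁) (x : X₁), φ (γ • x) = a (γ, x) • φ x)
    (hφ' : ∀ (η : Γ₂) (y : X₂), φ.symm (η • y) = b (η, y) • φ.symm y)
    (htf : IsTopologicallyFree Γ₁ X₁) (γ : Γ₁) (x : X₁) :
    b (a (γ, x), φ x) = γ :=
  htf.eq_of_continuous_of_smul_eq (f := fun x ↦ b (a (γ, x), φ x)) (by fun_prop)
    (cocycle_cocycle_smul φ a b hφ hφ' γ) x

end OrbitEquivalence

theorem stmt1_general {Γ₁ Γ₂ X₁ X₂ : Type*} [Group Γ₁] [Group Γ₂]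
    [TopologicalSpace Γ₁] [DiscreteTopology Γ₁]
    [TopologicalSpace Γ₂] [DiscreteTopology Γ₂]
    [TopologicalSpace X₁] [TopologicalSpace X₂]
    [MulAction Γ₁ X₁] [MulAction Γ₂ X₂]
    (φ : X₁ ≃ₜ X₂) (a : Γ₁ × X₁ → Γ₂) (b : Γ₂ × X₂ → Γ₁)
    (ha : Continuous a) (hb : Continuous b)
    (hφ : ∀ (γ : Γ₁) (x : X₁), φ (γ • x) = a (γ, x) • φ x)
    (hφ' : ∀ (η : Γ₂) (y : X₂), φ.symm (η • y) = b (η, y) • φ.symm y)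
    (htf₁ : ∀ γ : Γ₁, γ ≠ 1 → Dense {x : X₁ | γ • x ≠ x})
    (htf₂ : ∀ η : Γ₂, η ≠ 1 → Dense {y : X₂ | η • y ≠ y}) :
    (∀ (γ : Γ₁) (x : X₁), b (a (γ, x), φ x) = γ) ∧
    (∀ (η : Γ₂) (y : X₂), a (b (η, y), φ.symm y) = η) :=
  ⟨cocycle_cocycle_eq φ a b ha hb hφ hφ' htf₁, cocycle_cocycle_eq φ.symm b a hb ha hφ' hφ htf₂⟩

/-- for topologically free continuous orbit equivalent actions the
cocycles `a` and `b` are inverse to each other: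
`b(a(γ,x), φ(x)) = γ` and `a(b(η,y), φ⁻¹(y)) = η`. -/
theorem stmt1 {Γ₁ Γ₂ X₁ X₂ : Type*} [Group Γ₁] [Group Γ₂]
    [TopologicalSpace Γ₁] [DiscreteTopology Γ₁]
    [TopologicalSpace Γ₂] [DiscreteTopology Γ₂]
    [TopologicalSpace X₁] [TopologicalSpace X₂]
    [MulAction Γ₁ X₁] [MulAction Γ₂ X₂]
    [ContinuousConstSMul Γ₁ X₁] [ContinuousConstSMul Γ₂ X₂]
    (φ : X₁ ≃ₜ X₂) (a : Γ₁ × X₁ → Γ₂) (b : Γ₂ × X₂ → Γ₁)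
    (ha : Continuous a) (hb : Continuous b)
    (hφ : ∀ (γ : Γ₁) (x : X₁), φ (γ • x) = a (γ, x) • φ x)
    (hφ' : ∀ (η : Γ₂) (y : X₂), φ.symm (η • y) = b (η, y) • φ.symm y)
    (htf₁ : ∀ γ : Γ₁, γ ≠ 1 → Dense {x : X₁ | γ • x ≠ x})
    (htf₂ : ∀ η : Γ₂, η ≠ 1 → Dense {y : X₂ | η • y ≠ y}) :
    (∀ (γ : Γ₁) (x : X₁), b (a (γ, x), φ x) = γ) ∧
    (∀ (η : Γ₂) (y : X₂), a (b (η, y), φ.symm y) = η) :=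
  stmt1_general φ a b ha hb hφ hφ' htf₁ htf₂
end

section
/- Let Γ₁ ⊂ X₁ and Γ₂ ⊂ X₂ be topologically free continuous orbit equivalent actions via homeomorphism φ and cocycles a, b. For x ∈ X₁ let U_x = {u : a(γ,u) = a(γ,x) ∀γ ∈ Γ₁}, for y ∈ X₂ let V_y = {v : b(η,v) = b(η,y) ∀η ∈ Γ₂}, and set Û_x = U_x ∩ φ⁻¹(V_{φ(x)}). Then γ · Û_x = Û_{γ·x} for all γ ∈ Γ₁, x ∈ X₁. -/
/-!
Every identity between the cocycles follows from the rigidity of topologically free actions: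
two continuous maps into a discrete group whose actions agree along an open map agree
everywhere, since on an open set where both maps are constant the discrepancy fixes a nonempty
open set pointwise. This gives the cocycle identities for `a` and `b` and the inverse relation
`b (a (γ, x), φ x) = γ`. With them, `a (δ, γ • u) = a (δ * γ, u) * a (γ, u)⁻¹` and
`b (η, φ (γ • u)) = b (η * a (γ, u), φ u) * γ⁻¹`, so both families of values at `γ • u` are
determined by those at `u`, and `γ` maps `Û_x` into `Û_{γ • x}`; `γ⁻¹` gives the reverse inclusion.
-/

theorem eq_of_smul_eq_smul_of_isOpenMap {G Y Z : Type*} [Group G] [TopologicalSpace G]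
    [DiscreteTopology G] [TopologicalSpace Y] [TopologicalSpace Z] [MulAction G Y]
    (htf : ∀ g : G, g ≠ 1 → Dense {y : Y | g • y ≠ y}) {f : Z → Y} (hf : IsOpenMap f)
    {c₁ c₂ : Z → G} (hc₁ : Continuous c₁) (hc₂ : Continuous c₂)
    (h : ∀ z, c₁ z • f z = c₂ z • f z) : c₁ = c₂ := by
  funext z
  by_contra hne
  have hW : IsOpen (c₁ ⁻¹' {c₁ z} ∩ c₂ ⁻¹' {c₂ z}) :=
    ((isOpen_discrete _).preimage hc₁).inter ((isOpen_discrete _).preimage hc₂)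
  obtain ⟨_, hmoved, w, ⟨hw₁, hw₂⟩, rfl⟩ :=
    (htf ((c₂ z)⁻¹ * c₁ z) (by rwa [Ne, inv_mul_eq_one, eq_comm])).exists_mem_open
      (hf _ hW) ⟨f z, z, ⟨rfl, rfl⟩, rfl⟩
  apply hmoved
  rw [mul_smul, ← hw₁, h, ← hw₂, inv_smul_smul]

section Cocycle

variable {Γ₁ Γ₂ X₁ X₂ : Type*} [Group Γ₁] [Group Γ₂] [TopologicalSpace Γ₁] [TopologicalSpace Γ₂]
  [TopologicalSpace X₁] [TopologicalSpace X₂] [MulAction Γ₁ X₁] [MulAction Γ₂ X₂]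

theorem cocycle_mul_of_isOpenMap [DiscreteTopology Γ₂] [ContinuousConstSMul Γ₁ X₁]
    (htf : ∀ η : Γ₂, η ≠ 1 → Dense {y : X₂ | η • y ≠ y})
    {φ : X₁ → X₂} (hφo : IsOpenMap φ) {a : Γ₁ × X₁ → Γ₂} (ha : Continuous a)
    (hφ : ∀ (γ : Γ₁) (x : X₁), φ (γ • x) = a (γ, x) • φ x) (γ' γ : Γ₁) (x : X₁) :
    a (γ' * γ, x) = a (γ', γ • x) * a (γ, x) := by
  have hc₁ : Continuous fun x => a (γ' * γ, x) := ha.comp (.prodMk_right _)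
  have hc₂ : Continuous fun x => a (γ', γ • x) * a (γ, x) :=
    (ha.comp ((Continuous.prodMk_right γ').comp (continuous_const_smul γ))).mul
      (ha.comp (.prodMk_right _))
  refine congrFun (eq_of_smul_eq_smul_of_isOpenMap htf hφo hc₁ hc₂ fun x => ?_) x
  rw [← hφ, mul_smul, mul_smul, hφ, hφ]

theorem cocycle_symm_apply_cocycle [DiscreteTopology Γ₁] (htf : ∀ γ : Γ₁, γ ≠ 1 → Dense {x : X₁ | γ • x ≠ x})
    (φ : X₁ ≃ₜ X₂) {a : Γ₁ × X₁ → Γ₂} {b : Γ₂ × X₂ → Γ₁} (ha : Continuous a)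
    (hb : Continuous b) (hφ : ∀ (γ : Γ₁) (x : X₁), φ (γ • x) = a (γ, x) • φ x)
    (hφ' : ∀ (η : Γ₂) (y : X₂), φ.symm (η • y) = b (η, y) • φ.symm y) (γ : Γ₁) (x : X₁) :
    b (a (γ, x), φ x) = γ := by
  have hc : Continuous fun x => b (a (γ, x), φ x) :=
    hb.comp ((ha.comp (.prodMk_right _)).prodMk φ.continuous)
  refine congrFun (eq_of_smul_eq_smul_of_isOpenMap htf IsOpenMap.id hc continuous_const
    fun x => ?_) x
  simpa [← hφ] using (hφ' (a (γ, x)) (φ x)).symm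

end Cocycle

section Fiber

variable {Γ₁ Γ₂ X₁ X₂ : Type*} [Group Γ₁] [Group Γ₂] [MulAction Γ₁ X₁] [MulAction Γ₂ X₂]

/-- The set `Û_x = U_x ∩ φ⁻¹(V_{φ(x)})`. -/
def cocycleFiber (φ : X₁ → X₂) (a : Γ₁ × X₁ → Γ₂) (b : Γ₂ × X₂ → Γ₁) (x : X₁) : Set X₁ :=
  {u | (∀ δ : Γ₁, a (δ, u) = a (δ, x)) ∧ ∀ η : Γ₂, b (η, φ u) = b (η, φ x)}

variable {φ : X₁ → X₂} {a : Γ₁ × X₁ → Γ₂} {b : Γ₂ × X₂ → Γ₁}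
  (hφ : ∀ (γ : Γ₁) (x : X₁), φ (γ • x) = a (γ, x) • φ x)
  (hca : ∀ (γ' γ : Γ₁) (x : X₁), a (γ' * γ, x) = a (γ', γ • x) * a (γ, x))
  (hcb : ∀ (η' η : Γ₂) (y : X₂), b (η' * η, y) = b (η', η • y) * b (η, y))
  (hba : ∀ (γ : Γ₁) (x : X₁), b (a (γ, x), φ x) = γ)
include hφ hca hcb hba

theorem smul_mem_cocycleFiber {γ : Γ₁} {x u : X₁} (hu : u ∈ cocycleFiber φ a b x) :
    γ • u ∈ cocycleFiber φ a b (γ • x) := by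
  obtain ⟨hA, hB⟩ := hu
  have ha_smul : ∀ δ v, a (δ, γ • v) = a (δ * γ, v) * (a (γ, v))⁻¹ := fun δ v => by
    rw [hca, mul_inv_cancel_right]
  have hb_smul : ∀ η v, b (η, φ (γ • v)) = b (η * a (γ, v), φ v) * γ⁻¹ := fun η v => by
    rw [hφ, hcb, hba, mul_inv_cancel_right]
  exact ⟨fun δ => by rw [ha_smul, ha_smul, hA, hA], fun η => by rw [hb_smul, hb_smul, hA, hB]⟩

theorem smul_image_cocycleFiber (γ : Γ₁) (x : X₁) :
    (fun u => γ • u) '' cocycleFiber φ a b x = cocycleFiber φ a b (γ • x) := by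
  refine (Set.mapsTo_iff_image_subset.mp fun u => smul_mem_cocycleFiber hφ hca hcb hba).antisymm
    fun v hv => ⟨γ⁻¹ • v, ?_, smul_inv_smul γ v⟩
  simpa using smul_mem_cocycleFiber hφ hca hcb hba (γ := γ⁻¹) hv

end Fiber

/-- with `Û_x = U_x ∩ φ⁻¹(V_{φ(x)})`, one has `γ · Û_x = Û_{γ·x}`. -/
theorem stmt8 {Γ₁ Γ₂ X₁ X₂ : Type*} [Group Γ₁] [Group Γ₂]
    [TopologicalSpace Γ₁] [DiscreteTopology Γ₁]
    [TopologicalSpace Γ₂] [DiscreteTopology Γ₂]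
    [TopologicalSpace X₁] [TopologicalSpace X₂]
    [MulAction Γ₁ X₁] [MulAction Γ₂ X₂]
    [ContinuousConstSMul Γ₁ X₁] [ContinuousConstSMul Γ₂ X₂]
    (φ : X₁ ≃ₜ X₂) (a : Γ₁ × X₁ → Γ₂) (b : Γ₂ × X₂ → Γ₁)
    (ha : Continuous a) (hb : Continuous b)
    (hφ : ∀ (γ : Γ₁) (x : X₁), φ (γ • x) = a (γ, x) • φ x)
    (hφ' : ∀ (η : Γ₂) (y : X₂), φ.symm (η • y) = b (η, y) • φ.symm y)
    (htf₁ : ∀ γ : Γ₁, γ ≠ 1 → Dense {x : X₁ | γ • x ≠ x})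
    (htf₂ : ∀ η : Γ₂, η ≠ 1 → Dense {y : X₂ | η • y ≠ y}) :
    ∀ (γ : Γ₁) (x : X₁),
      (fun u : X₁ => γ • u) ''
          {u : X₁ | (∀ δ : Γ₁, a (δ, u) = a (δ, x)) ∧
            (∀ η : Γ₂, b (η, φ u) = b (η, φ x))} =
        {u : X₁ | (∀ δ : Γ₁, a (δ, u) = a (δ, γ • x)) ∧
            (∀ η : Γ₂, b (η, φ u) = b (η, φ (γ • x)))} :=
  smul_image_cocycleFiber (φ := φ) hφ
    (cocycle_mul_of_isOpenMap htf₂ φ.isOpenMap ha hφ)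
    (cocycle_mul_of_isOpenMap htf₁ φ.symm.isOpenMap hb hφ')
    (cocycle_symm_apply_cocycle htf₁ φ ha hb hφ hφ')
end

section
/- Let G₁, G₂ be groupoids with discrete group actions Γᵢ ⊂ Gᵢ. Suppose ψ : Γ₁ ⋉ G₁ → Γ₂ ⋉ G₂ is a groupoid isomorphism satisfying ψ({e₁} × G₁) = {e₂} × G₂ and ψ(Γ₁ × G₁⁽⁰⁾) = Γ₂ × G₂⁽⁰⁾. Write ψ(e₁, g) = (e₂, φ(g)) for a map φ : G₁ → G₂. Then φ is a groupoid isomorphism, and defining a(γ, u) as the Γ₂-component of ψ(γ, u) for u ∈ G₁⁽⁰⁾, one has ψ(γ, g) = (a(γ, r(g)), φ(g)) and φ(γ·g) = a(γ, r(g))·φ(g) for all γ ∈ Γ₁, g ∈ G₁. -/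
/-- An algebraic (small, "one-type") groupoid: a set `G` of morphisms with
source and range maps `src, rng : G → G` landing in the units, a composability
predicate `comp`, a (partially meaningful) multiplication and an inversion. -/
structure AlgGroupoid (G : Type*) where
  src : G → G
  rng : G → G
  comp : G → G → Prop
  mul : G → G → G
  inv : G → G
  comp_iff : ∀ g h, comp g h ↔ src g = rng h
  mul_assoc' : ∀ g h k, comp g h → comp h k → mul (mul g h) k = mul g (mul h k)
  src_mul : ∀ g h, comp g h → src (mul g h) = src h
  rng_mul : ∀ g h, comp g h → rng (mul g h) = rng g
  src_src : ∀ g, src (src g) = src g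
  rng_rng : ∀ g, rng (rng g) = rng g
  src_rng : ∀ g, src (rng g) = rng g
  rng_src : ∀ g, rng (src g) = src g
  mul_src : ∀ g, mul g (src g) = g
  rng_mul' : ∀ g, mul (rng g) g = g
  inv_inv : ∀ g, inv (inv g) = g
  src_inv : ∀ g, src (inv g) = rng g
  mul_inv : ∀ g, mul g (inv g) = rng g
  inv_mul : ∀ g, mul (inv g) g = src g

/-- An action of a group `Γ` on a groupoid `(G, S)` by groupoid automorphisms,
encoded via a `MulAction Γ G`: each `γ ∈ Γ` acts as a groupoid automorphism. -/
def IsGroupoidMulAction (Γ : Type*) [Group Γ] {G : Type*} [MulAction Γ G]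
    (S : AlgGroupoid G) : Prop :=
  (∀ (γ : Γ) (g h : G), S.comp g h → S.comp (γ • g) (γ • h)) ∧
  (∀ (γ : Γ) (g h : G), S.comp g h → γ • S.mul g h = S.mul (γ • g) (γ • h)) ∧
  (∀ (γ : Γ) (g : G), γ • S.inv g = S.inv (γ • g)) ∧
  (∀ (γ : Γ) (g : G), γ • S.src g = S.src (γ • g)) ∧
  (∀ (γ : Γ) (g : G), γ • S.rng g = S.rng (γ • g))

/-- `T` is the semidirect product groupoid `Γ ⋉ G` built from the action of `Γ`
on the groupoid `(G, S)`: the underlying set is `Γ × G`, `(γ,g)` and `(γ',g')`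
are composable iff `(γ'⁻¹·g, g')` are composable in `G`, with product
`(γ,g)(γ',g') = (γγ', (γ'⁻¹·g)·g')`, inverse `(γ,g)⁻¹ = (γ⁻¹, γ·g⁻¹)`, source
`s(γ,g) = (e, γ⁻¹·s(g))` and range `r(γ,g) = (e, r(g))`. -/
def SemidirectData (Γ : Type*) [Group Γ] {G : Type*} [MulAction Γ G]
    (S : AlgGroupoid G) (T : AlgGroupoid (Γ × G)) : Prop :=
  (∀ p q : Γ × G, T.comp p q ↔ S.comp (q.1⁻¹ • p.2) q.2) ∧
  (∀ p q : Γ × G, T.mul p q = (p.1 * q.1, S.mul (q.1⁻¹ • p.2) q.2)) ∧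
  (∀ p : Γ × G, T.inv p = (p.1⁻¹, p.1 • S.inv p.2)) ∧
  (∀ p : Γ × G, T.src p = (1, p.1⁻¹ • S.src p.2)) ∧
  (∀ p : Γ × G, T.rng p = (1, S.rng p.2))


/-! The proof rests on two factorisations in `Γ ⋉ G`,
`(γ, g) = (γ, r g) · (e, g)` and `(γ, g) = (e, γ • g) · (γ, s g)`,
whose right, resp. left, factor lies in `Γ × G⁽⁰⁾`. Since `ψ` preserves products and
maps both `{e} × G` and `Γ × G⁽⁰⁾` into their counterparts, applying `ψ` to the first
factorisation gives `ψ(γ, g) = (a(γ, r g), φ g)`; applying it to the second gives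
`ψ(γ, g) = (a(γ, s g), a(γ, s g)⁻¹ • φ(γ • g))`, and comparing the two yields the
equivariance of `φ`. -/

namespace AlgGroupoid

variable {G : Type*} (S : AlgGroupoid G)

theorem rng_eq_self_of_src_eq_self {u : G} (hu : S.src u = u) : S.rng u = u := by
  rw [← hu, S.rng_src]

end AlgGroupoid

namespace SemidirectData

variable {Γ G : Type*} [Group Γ] [MulAction Γ G] {S : AlgGroupoid G}
  {T : AlgGroupoid (Γ × G)} (hT : SemidirectData Γ S T)
include hT

theorem comp_one_one_iff (g h : G) : T.comp (1, g) (1, h) ↔ S.comp g h := by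
  simp only [hT.1, inv_one, one_smul]

theorem mul_one_one (g h : G) : T.mul (1, g) (1, h) = (1, S.mul g h) := by
  simp only [hT.2.1, inv_one, one_smul, mul_one]

theorem inv_one_mk (g : G) : T.inv (1, g) = (1, S.inv g) := by
  simp only [hT.2.2.1, inv_one, one_smul]

theorem comp_rng_one (γ : Γ) (g : G) : T.comp (γ, S.rng g) (1, g) := by
  rw [hT.1, inv_one, one_smul, S.comp_iff, S.src_rng]

theorem mul_rng_one (γ : Γ) (g : G) : T.mul (γ, S.rng g) (1, g) = (γ, g) := by
  rw [hT.2.1, inv_one, one_smul, mul_one, S.rng_mul']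

theorem comp_one_smul_src (γ : Γ) (g : G) : T.comp (1, γ • g) (γ, S.src g) := by
  rw [hT.1, inv_smul_smul, S.comp_iff, S.rng_src]

theorem mul_one_smul_src (γ : Γ) (g : G) : T.mul (1, γ • g) (γ, S.src g) = (γ, g) := by
  rw [hT.2.1, inv_smul_smul, one_mul, S.mul_src]

theorem mul_one_of_src_eq_self {η : Γ} {v h : G} (hv : S.src v = v)
    (hc : T.comp (η, v) (1, h)) : T.mul (η, v) (1, h) = (η, h) := by
  rw [hT.1, inv_one, one_smul, S.comp_iff, hv] at hc
  rw [hT.2.1, inv_one, one_smul, mul_one, hc, S.rng_mul']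

theorem one_mul_of_src_eq_self {x : G} {η : Γ} {w : G} (hw : S.src w = w)
    (hc : T.comp (1, x) (η, w)) : T.mul (1, x) (η, w) = (η, η⁻¹ • x) := by
  rw [hT.1, S.comp_iff, S.rng_eq_self_of_src_eq_self hw] at hc
  rw [hT.2.1, one_mul, ← hc, S.mul_src]

end SemidirectData

theorem Equiv.bijective_snd_apply_one {Γ₁ Γ₂ G₁ G₂ : Type*} [One Γ₁] [One Γ₂]
    (ψ : (Γ₁ × G₁) ≃ (Γ₂ × G₂)) (hG : ∀ g : G₁, (ψ (1, g)).1 = 1)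
    (hG' : ∀ g' : G₂, (ψ.symm (1, g')).1 = 1) :
    Function.Bijective (fun g : G₁ => (ψ (1, g)).2) := by
  refine ⟨fun g h hgh => ?_, fun g' => ⟨(ψ.symm (1, g')).2, ?_⟩⟩
  · have : ψ (1, g) = ψ (1, h) := Prod.ext (by rw [hG, hG]) hgh
    exact congrArg Prod.snd (ψ.injective this)
  · have : ((1 : Γ₁), (ψ.symm (1, g')).2) = ψ.symm (1, g') := Prod.ext (hG' g').symm rfl
    simp only [this, Equiv.apply_symm_apply]

section SemidirectHom

variable {Γ₁ Γ₂ G₁ G₂ : Type*} [Group Γ₁] [Group Γ₂] [MulAction Γ₁ G₁] [MulAction Γ₂ G₂]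
  {S₁ : AlgGroupoid G₁} {S₂ : AlgGroupoid G₂}
  {T₁ : AlgGroupoid (Γ₁ × G₁)} {T₂ : AlgGroupoid (Γ₂ × G₂)}
  {ψ : Γ₁ × G₁ → Γ₂ × G₂}

theorem apply_eq_apply_rng_one (hT₁ : SemidirectData Γ₁ S₁ T₁)
    (hT₂ : SemidirectData Γ₂ S₂ T₂)
    (hcomp : ∀ p q, T₁.comp p q → T₂.comp (ψ p) (ψ q))
    (hmul : ∀ p q, T₁.comp p q → ψ (T₁.mul p q) = T₂.mul (ψ p) (ψ q))
    (hG : ∀ g : G₁, (ψ (1, g)).1 = 1)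
    (hU : ∀ (γ : Γ₁) (u : G₁), S₁.src u = u → S₂.src (ψ (γ, u)).2 = (ψ (γ, u)).2)
    (γ : Γ₁) (g : G₁) : ψ (γ, g) = ((ψ (γ, S₁.rng g)).1, (ψ (1, g)).2) := by
  have hψ : ψ (1, g) = (1, (ψ (1, g)).2) := Prod.ext (hG g) rfl
  have hc := hcomp _ _ (hT₁.comp_rng_one γ g)
  rw [hψ] at hc
  calc ψ (γ, g) = T₂.mul (ψ (γ, S₁.rng g)) (ψ (1, g)) := by
        rw [← hmul _ _ (hT₁.comp_rng_one γ g), hT₁.mul_rng_one]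
    _ = _ := by rw [hψ]; exact hT₂.mul_one_of_src_eq_self (hU _ _ (S₁.src_rng g)) hc

theorem apply_eq_apply_src_one_smul (hT₁ : SemidirectData Γ₁ S₁ T₁)
    (hT₂ : SemidirectData Γ₂ S₂ T₂)
    (hcomp : ∀ p q, T₁.comp p q → T₂.comp (ψ p) (ψ q))
    (hmul : ∀ p q, T₁.comp p q → ψ (T₁.mul p q) = T₂.mul (ψ p) (ψ q))
    (hG : ∀ g : G₁, (ψ (1, g)).1 = 1)
    (hU : ∀ (γ : Γ₁) (u : G₁), S₁.src u = u → S₂.src (ψ (γ, u)).2 = (ψ (γ, u)).2)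
    (γ : Γ₁) (g : G₁) :
    ψ (γ, g) = ((ψ (γ, S₁.src g)).1, (ψ (γ, S₁.src g)).1⁻¹ • (ψ (1, γ • g)).2) := by
  have hψ : ψ (1, γ • g) = (1, (ψ (1, γ • g)).2) := Prod.ext (hG _) rfl
  have hc := hcomp _ _ (hT₁.comp_one_smul_src γ g)
  rw [hψ] at hc
  calc ψ (γ, g) = T₂.mul (ψ (1, γ • g)) (ψ (γ, S₁.src g)) := by
        rw [← hmul _ _ (hT₁.comp_one_smul_src γ g), hT₁.mul_one_smul_src]
    _ = _ := by rw [hψ]; exact hT₂.one_mul_of_src_eq_self (hU _ _ (S₁.src_src g)) hc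

end SemidirectHom

theorem stmt18_general {Γ₁ Γ₂ G₁ G₂ : Type*} [Group Γ₁] [Group Γ₂]
    [MulAction Γ₁ G₁] [MulAction Γ₂ G₂]
    (S₁ : AlgGroupoid G₁) (S₂ : AlgGroupoid G₂)
    (T₁ : AlgGroupoid (Γ₁ × G₁)) (T₂ : AlgGroupoid (Γ₂ × G₂))
    (hT₁ : SemidirectData Γ₁ S₁ T₁) (hT₂ : SemidirectData Γ₂ S₂ T₂)
    (ψ : (Γ₁ × G₁) ≃ (Γ₂ × G₂))
    (hcomp : ∀ p q : Γ₁ × G₁, T₁.comp p q ↔ T₂.comp (ψ p) (ψ q))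
    (hmul : ∀ p q : Γ₁ × G₁, T₁.comp p q → ψ (T₁.mul p q) = T₂.mul (ψ p) (ψ q))
    (hinv : ∀ p : Γ₁ × G₁, ψ (T₁.inv p) = T₂.inv (ψ p))
    -- `ψ({e₁} × G₁) = {e₂} × G₂`:
    (hG : ∀ g : G₁, (ψ ((1 : Γ₁), g)).1 = 1)
    (hG' : ∀ g' : G₂, (ψ.symm ((1 : Γ₂), g')).1 = 1)
    -- `ψ(Γ₁ × G₁⁽⁰⁾) = Γ₂ × G₂⁽⁰⁾`:
    (hU : ∀ (γ : Γ₁) (u : G₁), S₁.src u = u → S₂.src (ψ (γ, u)).2 = (ψ (γ, u)).2) :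
    -- `φ := g ↦ (ψ(e₁,g)).2` is a groupoid isomorphism:
    Function.Bijective (fun g : G₁ => (ψ ((1 : Γ₁), g)).2) ∧
    (∀ g h : G₁, S₁.comp g h ↔
        S₂.comp (ψ ((1 : Γ₁), g)).2 (ψ ((1 : Γ₁), h)).2) ∧
    (∀ g h : G₁, S₁.comp g h →
        (ψ ((1 : Γ₁), S₁.mul g h)).2 =
          S₂.mul (ψ ((1 : Γ₁), g)).2 (ψ ((1 : Γ₁), h)).2) ∧
    (∀ g : G₁, (ψ ((1 : Γ₁), S₁.inv g)).2 = S₂.inv (ψ ((1 : Γ₁), g)).2) ∧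
    -- `ψ(γ, g) = (a(γ, r(g)), φ(g))` where `a(γ, u) := (ψ(γ, u)).1`:
    (∀ (γ : Γ₁) (g : G₁),
        ψ (γ, g) = ((ψ (γ, S₁.rng g)).1, (ψ ((1 : Γ₁), g)).2)) ∧
    -- `φ(γ·g) = a(γ, r(g))·φ(g)`:
    (∀ (γ : Γ₁) (g : G₁),
        (ψ ((1 : Γ₁), γ • g)).2 =
          (ψ (γ, S₁.rng g)).1 • (ψ ((1 : Γ₁), g)).2) := by
  have hcomp' : ∀ p q, T₁.comp p q → T₂.comp (ψ p) (ψ q) := fun p q h => (hcomp p q).1 h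
  have hψ : ∀ g : G₁, ψ (1, g) = (1, (ψ (1, g)).2) := fun g => Prod.ext (hG g) rfl
  have happly := apply_eq_apply_rng_one hT₁ hT₂ hcomp' hmul hG hU
  refine ⟨ψ.bijective_snd_apply_one hG hG', fun g h => ?_, fun g h hgh => ?_, fun g => ?_,
    happly, fun γ g => ?_⟩
  · rw [← hT₁.comp_one_one_iff, hcomp, hψ g, hψ h, hT₂.comp_one_one_iff]
  · have := hmul _ _ ((hT₁.comp_one_one_iff g h).2 hgh)
    rw [hT₁.mul_one_one, hψ g, hψ h, hT₂.mul_one_one] at this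
    exact congrArg Prod.snd this
  · have := hinv (1, g)
    rw [hT₁.inv_one_mk, hψ g, hT₂.inv_one_mk] at this
    exact congrArg Prod.snd this
  · have h := apply_eq_apply_src_one_smul hT₁ hT₂ hcomp' hmul hG hU γ g
    rw [happly γ g, Prod.mk.injEq] at h
    rw [h.1, h.2, smul_inv_smul]

/-- if `ψ : Γ₁ ⋉ G₁ → Γ₂ ⋉ G₂` is a groupoid isomorphism with
`ψ({e₁} × G₁) = {e₂} × G₂` and `ψ(Γ₁ × G₁⁽⁰⁾) = Γ₂ × G₂⁽⁰⁾`, then, writing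
`ψ(e₁, g) = (e₂, φ(g))` and letting `a(γ, u)` be the `Γ₂`-component of
`ψ(γ, u)` for units `u`, the map `φ` is a groupoid isomorphism,
`ψ(γ, g) = (a(γ, r(g)), φ(g))`, and `φ(γ·g) = a(γ, r(g))·φ(g)`. -/
theorem stmt18 {Γ₁ Γ₂ G₁ G₂ : Type*} [Group Γ₁] [Group Γ₂]
    [MulAction Γ₁ G₁] [MulAction Γ₂ G₂]
    (S₁ : AlgGroupoid G₁) (S₂ : AlgGroupoid G₂)
    (hact₁ : IsGroupoidMulAction Γ₁ S₁) (hact₂ : IsGroupoidMulAction Γ₂ S₂)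
    (T₁ : AlgGroupoid (Γ₁ × G₁)) (T₂ : AlgGroupoid (Γ₂ × G₂))
    (hT₁ : SemidirectData Γ₁ S₁ T₁) (hT₂ : SemidirectData Γ₂ S₂ T₂)
    (ψ : (Γ₁ × G₁) ≃ (Γ₂ × G₂))
    (hcomp : ∀ p q : Γ₁ × G₁, T₁.comp p q ↔ T₂.comp (ψ p) (ψ q))
    (hmul : ∀ p q : Γ₁ × G₁, T₁.comp p q → ψ (T₁.mul p q) = T₂.mul (ψ p) (ψ q))
    (hinv : ∀ p : Γ₁ × G₁, ψ (T₁.inv p) = T₂.inv (ψ p))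
    -- `ψ({e₁} × G₁) = {e₂} × G₂`:
    (hG : ∀ g : G₁, (ψ ((1 : Γ₁), g)).1 = 1)
    (hG' : ∀ g' : G₂, (ψ.symm ((1 : Γ₂), g')).1 = 1)
    -- `ψ(Γ₁ × G₁⁽⁰⁾) = Γ₂ × G₂⁽⁰⁾`:
    (hU : ∀ (γ : Γ₁) (u : G₁), S₁.src u = u → S₂.src (ψ (γ, u)).2 = (ψ (γ, u)).2)
    (hU' : ∀ (η : Γ₂) (v : G₂), S₂.src v = v →
        S₁.src (ψ.symm (η, v)).2 = (ψ.symm (η, v)).2) :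
    -- `φ := g ↦ (ψ(e₁,g)).2` is a groupoid isomorphism:
    Function.Bijective (fun g : G₁ => (ψ ((1 : Γ₁), g)).2) ∧
    (∀ g h : G₁, S₁.comp g h ↔
        S₂.comp (ψ ((1 : Γ₁), g)).2 (ψ ((1 : Γ₁), h)).2) ∧
    (∀ g h : G₁, S₁.comp g h →
        (ψ ((1 : Γ₁), S₁.mul g h)).2 =
          S₂.mul (ψ ((1 : Γ₁), g)).2 (ψ ((1 : Γ₁), h)).2) ∧
    (∀ g : G₁, (ψ ((1 : Γ₁), S₁.inv g)).2 = S₂.inv (ψ ((1 : Γ₁), g)).2) ∧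
    -- `ψ(γ, g) = (a(γ, r(g)), φ(g))` where `a(γ, u) := (ψ(γ, u)).1`:
    (∀ (γ : Γ₁) (g : G₁),
        ψ (γ, g) = ((ψ (γ, S₁.rng g)).1, (ψ ((1 : Γ₁), g)).2)) ∧
    -- `φ(γ·g) = a(γ, r(g))·φ(g)`:
    (∀ (γ : Γ₁) (g : G₁),
        (ψ ((1 : Γ₁), γ • g)).2 =
          (ψ (γ, S₁.rng g)).1 • (ψ ((1 : Γ₁), g)).2) :=
  stmt18_general S₁ S₂ T₁ T₂ hT₁ hT₂ ψ hcomp hmul hinv hG hG' hU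
end

section
/- Let Γ be a countable discrete group acting topologically freely on a topological space X via homeomorphisms, and suppose the actions Γ₁ ⊂ X₁, Γ₂ ⊂ X₂ are topologically free and continuous orbit equivalent via φ, a, b. Define ψ : Γ₁ × X₁ → Γ₂ × X₂ by ψ(γ, x) = (a(γ, x), φ(x)), where Γᵢ × Xᵢ is the transformation groupoid with product (γ,x)(γ',x') = (γγ', x') when x = γ'·x'. Then ψ is a groupoid isomorphism between the transformation groupoids Γ₁ ⋉ X₁ and Γ₂ ⋉ X₂. -/
/-!
Topological freeness makes a continuous map `c : X → Γ` into a discrete group determined by the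
points `c x • x`: if two such maps disagreed at `x`, they would be constant near `x`, and the
nontrivial element `(c₂ x)⁻¹ * c₁ x` would fix a whole open set. Both sides of the cocycle
identity for `a`, and both sides of `b (a (γ, x), φ x) = γ`, move every point to the same place,
so these identities hold; they say that `ψ` respects products and inverses and that
`(η, y) ↦ (b (η, y), φ⁻¹ y)` is inverse to `ψ`.
-/

def IsTopologicallyFree (Γ X : Type*) [Monoid Γ] [TopologicalSpace X] [MulAction Γ X] : Prop :=
  ∀ γ : Γ, γ ≠ 1 → Dense {x : X | γ • x ≠ x}

namespace IsTopologicallyFree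

variable {Γ₁ Γ₂ X₁ X₂ : Type*} [Group Γ₁] [Group Γ₂]
  [TopologicalSpace Γ₁] [TopologicalSpace Γ₂] [TopologicalSpace X₁] [TopologicalSpace X₂]
  [MulAction Γ₁ X₁] [MulAction Γ₂ X₂]

theorem eq_of_forall_smul_eq [DiscreteTopology Γ₁] (htf : IsTopologicallyFree Γ₁ X₁)
    {c₁ c₂ : X₁ → Γ₁} (hc₁ : Continuous c₁) (hc₂ : Continuous c₂)
    (h : ∀ x, c₁ x • x = c₂ x • x) : c₁ = c₂ := by
  funext x
  by_contra hne
  have hU : IsOpen {z | c₁ z = c₁ x ∧ c₂ z = c₂ x} :=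
    ((isOpen_discrete {c₁ x}).preimage hc₁).inter ((isOpen_discrete {c₂ x}).preimage hc₂)
  have hγ : (c₂ x)⁻¹ * c₁ x ≠ 1 := by rwa [ne_eq, inv_mul_eq_one, eq_comm]
  obtain ⟨z, hz, hz₁, hz₂⟩ := (htf _ hγ).exists_mem_open hU ⟨x, rfl, rfl⟩
  apply hz
  rw [mul_smul, ← hz₁, h, hz₂, inv_smul_smul]

variable (φ : X₁ ≃ₜ X₂) {a : Γ₁ × X₁ → Γ₂} {b : Γ₂ × X₂ → Γ₁}

theorem cocycle_mul [DiscreteTopology Γ₂] [ContinuousConstSMul Γ₁ X₁]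
    (htf : IsTopologicallyFree Γ₂ X₂) (ha : Continuous a)
    (hφ : ∀ (γ : Γ₁) (x : X₁), φ (γ • x) = a (γ, x) • φ x) (γ γ' : Γ₁) (x : X₁) :
    a (γ * γ', x) = a (γ, γ' • x) * a (γ', x) := by
  have key := htf.eq_of_forall_smul_eq (c₁ := fun y => a (γ * γ', φ.symm y))
    (c₂ := fun y => a (γ, γ' • φ.symm y) * a (γ', φ.symm y)) (by fun_prop) (by fun_prop)
    (φ.surjective.forall.2 fun x => by
      simp only [Homeomorph.symm_apply_apply]
      rw [mul_smul, ← hφ, ← hφ, ← hφ, mul_smul])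
  simpa using congrFun key (φ x)

theorem cocycle_one [DiscreteTopology Γ₂] [ContinuousConstSMul Γ₁ X₁]
    (htf : IsTopologicallyFree Γ₂ X₂) (ha : Continuous a)
    (hφ : ∀ (γ : Γ₁) (x : X₁), φ (γ • x) = a (γ, x) • φ x) (x : X₁) : a (1, x) = 1 := by
  have := htf.cocycle_mul φ ha hφ 1 1 x
  rwa [one_mul, one_smul, left_eq_mul] at this

theorem cocycle_inv [DiscreteTopology Γ₂] [ContinuousConstSMul Γ₁ X₁]
    (htf : IsTopologicallyFree Γ₂ X₂) (ha : Continuous a)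
    (hφ : ∀ (γ : Γ₁) (x : X₁), φ (γ • x) = a (γ, x) • φ x) (γ : Γ₁) (x : X₁) :
    a (γ⁻¹, γ • x) = (a (γ, x))⁻¹ := by
  have := htf.cocycle_mul φ ha hφ γ⁻¹ γ x
  rw [inv_mul_cancel, htf.cocycle_one φ ha hφ] at this
  exact eq_inv_of_mul_eq_one_left this.symm

theorem leftInverse_prodMk_cocycle [DiscreteTopology Γ₁] (htf : IsTopologicallyFree Γ₁ X₁)
    (ha : Continuous a) (hb : Continuous b)
    (hφ : ∀ (γ : Γ₁) (x : X₁), φ (γ • x) = a (γ, x) • φ x)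
    (hφ' : ∀ (η : Γ₂) (y : X₂), φ.symm (η • y) = b (η, y) • φ.symm y) :
    Function.LeftInverse (fun q : Γ₂ × X₂ => (b q, φ.symm q.2))
      (fun p : Γ₁ × X₁ => (a p, φ p.2)) := by
  rintro ⟨γ, x⟩
  have key := htf.eq_of_forall_smul_eq (c₁ := fun x => b (a (γ, x), φ x)) (c₂ := fun _ => γ)
    (by fun_prop) continuous_const
    (fun x => by simpa [← hφ] using (hφ' (a (γ, x)) (φ x)).symm)
  simpa using congrFun key x

end IsTopologicallyFree

theorem stmt19_general {Γ₁ Γ₂ X₁ X₂ : Type*} [Group Γ₁] [Group Γ₂]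
    [TopologicalSpace Γ₁] [DiscreteTopology Γ₁]
    [TopologicalSpace Γ₂] [DiscreteTopology Γ₂]
    [TopologicalSpace X₁] [TopologicalSpace X₂]
    [MulAction Γ₁ X₁] [MulAction Γ₂ X₂]
    [ContinuousConstSMul Γ₁ X₁]
    (htf₁ : ∀ γ : Γ₁, γ ≠ 1 → Dense {x : X₁ | γ • x ≠ x})
    (htf₂ : ∀ η : Γ₂, η ≠ 1 → Dense {y : X₂ | η • y ≠ y})
    (φ : X₁ ≃ₜ X₂) (a : Γ₁ × X₁ → Γ₂) (b : Γ₂ × X₂ → Γ₁)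
    (ha : Continuous a) (hb : Continuous b)
    (hφ : ∀ (γ : Γ₁) (x : X₁), φ (γ • x) = a (γ, x) • φ x)
    (hφ' : ∀ (η : Γ₂) (y : X₂), φ.symm (η • y) = b (η, y) • φ.symm y) :
    Function.Bijective (fun p : Γ₁ × X₁ => (a p, φ p.2)) ∧
    Continuous (fun p : Γ₁ × X₁ => (a p, φ p.2)) ∧
    -- `ψ` preserves composability and the product:
    (∀ (γ γ' : Γ₁) (x' : X₁),
        φ (γ' • x') = a (γ', x') • φ x' ∧
        ((a (γ * γ', x') : Γ₂), φ x') =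
          (a (γ, γ' • x') * a (γ', x'), φ x')) ∧
    -- `ψ` preserves inversion:
    (∀ (γ : Γ₁) (x : X₁),
        ((a (γ⁻¹, γ • x) : Γ₂), φ (γ • x)) = ((a (γ, x))⁻¹, a (γ, x) • φ x)) := by
  have htf₁ : IsTopologicallyFree Γ₁ X₁ := htf₁
  have htf₂ : IsTopologicallyFree Γ₂ X₂ := htf₂
  refine ⟨Function.bijective_iff_has_inverse.2 ⟨fun q => (b q, φ.symm q.2),
      htf₁.leftInverse_prodMk_cocycle φ ha hb hφ hφ',
      htf₂.leftInverse_prodMk_cocycle φ.symm hb ha hφ' hφ⟩,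
    by fun_prop,
    fun γ γ' x' => ⟨hφ γ' x', by rw [htf₂.cocycle_mul φ ha hφ]⟩,
    fun γ x => by rw [htf₂.cocycle_inv φ ha hφ, hφ]⟩

/-- for countable discrete groups with topologically free,
continuous orbit equivalent actions (via `φ`, `a`, `b`), the map
`ψ(γ, x) = (a(γ, x), φ(x))` is an isomorphism of the transformation groupoids
`Γ₁ ⋉ X₁ → Γ₂ ⋉ X₂`: it is a continuous bijection preserving the groupoid
product `(γ, γ'·x')(γ', x') = (γγ', x')` (together with composability) and the
inversion `(γ, x)⁻¹ = (γ⁻¹, γ·x)`. -/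
theorem stmt19 {Γ₁ Γ₂ X₁ X₂ : Type*} [Group Γ₁] [Group Γ₂]
    [Countable Γ₁] [Countable Γ₂]
    [TopologicalSpace Γ₁] [DiscreteTopology Γ₁]
    [TopologicalSpace Γ₂] [DiscreteTopology Γ₂]
    [TopologicalSpace X₁] [TopologicalSpace X₂]
    [MulAction Γ₁ X₁] [MulAction Γ₂ X₂]
    [ContinuousConstSMul Γ₁ X₁] [ContinuousConstSMul Γ₂ X₂]
    (htf₁ : ∀ γ : Γ₁, γ ≠ 1 → Dense {x : X₁ | γ • x ≠ x})
    (htf₂ : ∀ η : Γ₂, η ≠ 1 → Dense {y : X₂ | η • y ≠ y})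
    (φ : X₁ ≃ₜ X₂) (a : Γ₁ × X₁ → Γ₂) (b : Γ₂ × X₂ → Γ₁)
    (ha : Continuous a) (hb : Continuous b)
    (hφ : ∀ (γ : Γ₁) (x : X₁), φ (γ • x) = a (γ, x) • φ x)
    (hφ' : ∀ (η : Γ₂) (y : X₂), φ.symm (η • y) = b (η, y) • φ.symm y) :
    Function.Bijective (fun p : Γ₁ × X₁ => (a p, φ p.2)) ∧
    Continuous (fun p : Γ₁ × X₁ => (a p, φ p.2)) ∧
    -- `ψ` preserves composability and the product:
    (∀ (γ γ' : Γ₁) (x' : X₁),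
        φ (γ' • x') = a (γ', x') • φ x' ∧
        ((a (γ * γ', x') : Γ₂), φ x') =
          (a (γ, γ' • x') * a (γ', x'), φ x')) ∧
    -- `ψ` preserves inversion:
    (∀ (γ : Γ₁) (x : X₁),
        ((a (γ⁻¹, γ • x) : Γ₂), φ (γ • x)) = ((a (γ, x))⁻¹, a (γ, x) • φ x)) :=
  stmt19_general htf₁ htf₂ φ a b ha hb hφ hφ'
end
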